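/- If a sequence q_1 q_2 ⋯ q_n from {A, S, N} is attainable over a field F, then: (i) q_n ≠ S, and (ii) neither NA nor NS occurs as a consecutive subsequence of q_1 q_2 ⋯ q_n. -/

import Mathlib

open Matrix

/-- The minor of a square matrix `B` lying in the rows indexed by `α` and the columns
indexed by `β` (each listed in increasing order); junk value `0` if `α.card ≠ β.card`. -/
def qMinor {R : Type*} [CommRing R] {m : Type*} [Fintype m] [LinearOrder m]
    (B : Matrix m m R) (α β : Finset m) : R :=
  if h : β.card = α.card then
    (Matrix.of fun i j : Fin α.card =>
      B (α.orderEmbOfFin rfl i) (β.orderEmbOfFin h j)).det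
  else 0

/-- `α` and `β` index a quasi-principal submatrix of order `k`, i.e.
`|α| = |β| = k` and `k - 1 ≤ |α ∩ β| (≤ k)`. -/
def IsQPPair {m : Type*} [DecidableEq m] (k : ℕ) (α β : Finset m) : Prop :=
  α.card = k ∧ β.card = k ∧ k - 1 ≤ (α ∩ β).card

/-- All quasi-principal minors of `B` of order `k` are nonzero. -/
def QPAllNonzero {R : Type*} [CommRing R] {m : Type*} [Fintype m] [LinearOrder m]
    (B : Matrix m m R) (k : ℕ) : Prop :=
  ∀ α β : Finset m, IsQPPair k α β → qMinor B α β ≠ 0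

/-- All quasi-principal minors of `B` of order `k` are zero. -/
def QPAllZero {R : Type*} [CommRing R] {m : Type*} [Fintype m] [LinearOrder m]
    (B : Matrix m m R) (k : ℕ) : Prop :=
  ∀ α β : Finset m, IsQPPair k α β → qMinor B α β = 0

/-- The three possible letters of a qpr-sequence. -/
inductive QPR : Type
  | A
  | S
  | N
deriving DecidableEq

open Classical in
/-- The letter of the qpr-sequence of `B` corresponding to order `k`:
`A` if all quasi-principal minors of order `k` are nonzero, `N` if all are zero,
and `S` otherwise. -/
noncomputable def qprEntry {R : Type*} [CommRing R] {m : Type*} [Fintype m] [LinearOrder m]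
    (B : Matrix m m R) (k : ℕ) : QPR :=
  if QPAllNonzero B k then QPR.A
  else if QPAllZero B k then QPR.N
  else QPR.S

/-- A sequence of letters `q 0, …, q (n-1)` (standing for `q_1 ⋯ q_n`) is attainable
over `F` if it is the qpr-sequence of an `n × n` symmetric matrix over `F`. -/
def Attainable (F : Type*) [Field F] {n : ℕ} (q : Fin n → QPR) : Prop :=
  ∃ B : Matrix (Fin n) (Fin n) F, B.IsSymm ∧ ∀ k : Fin n, qprEntry B ((k : ℕ) + 1) = q k

/-- The Schur complement `B/B[γ] = B[γᶜ] - B[γᶜ, γ] B[γ]⁻¹ B[γ, γᶜ]`,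
with rows and columns indexed by `γᶜ` (indexing inherited from `B`). -/
noncomputable def schurCompl {R : Type*} [CommRing R] {n : ℕ}
    (B : Matrix (Fin n) (Fin n) R) (γ : Finset (Fin n)) :
    Matrix ↥(γᶜ) ↥(γᶜ) R :=
  B.submatrix (fun i : ↥(γᶜ) => (i : Fin n)) (fun j : ↥(γᶜ) => (j : Fin n)) -
    B.submatrix (fun i : ↥(γᶜ) => (i : Fin n)) (fun j : ↥γ => (j : Fin n)) *
      (B.submatrix (fun i : ↥γ => (i : Fin n)) fun j : ↥γ => (j : Fin n))⁻¹ *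
      B.submatrix (fun i : ↥γ => (i : Fin n)) fun j : ↥(γᶜ) => (j : Fin n)

/-- The `(m+1) × (m+1)` matrix with block form `[[A, x], [yᵀ, b]]`. -/
def borderMat {R : Type*} [CommRing R] {m : ℕ} (A : Matrix (Fin m) (Fin m) R)
    (x y : Fin m → R) (b : R) : Matrix (Fin (m + 1)) (Fin (m + 1)) R :=
  Matrix.of fun i j =>
    if hi : (i : ℕ) < m then
      if hj : (j : ℕ) < m then A ⟨i, hi⟩ ⟨j, hj⟩ else x ⟨i, hi⟩
    else
      if hj : (j : ℕ) < m then y ⟨j, hj⟩ else b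

/-! A matrix has a single quasi-principal pair of maximal order, namely (univ, univ), so the last
letter is `A` or `N`. If every quasi-principal minor of order `k` vanishes, then Laplace expansion
of a quasi-principal minor of order `k + 1` along a row outside its column set (any row, if the
minor is principal) writes it as a combination of quasi-principal minors of order `k`, so it
vanishes as well; hence an `N` is followed by `N`. -/

theorem Finset.orderEmbOfFin_succAbove {m : Type*} [LinearOrder m] (s : Finset m) {k : ℕ}
    (h : s.card = k + 1) (i : Fin (k + 1)) (he : (s.erase (s.orderEmbOfFin h i)).card = k)
    (j : Fin k) :
    s.orderEmbOfFin h (i.succAbove j) = (s.erase (s.orderEmbOfFin h i)).orderEmbOfFin he j := by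
  have hmem : ∀ x : Fin k, s.orderEmbOfFin h (i.succAbove x) ∈ s.erase (s.orderEmbOfFin h i) :=
    fun x => Finset.mem_erase.mpr
      ⟨fun hx => Fin.succAbove_ne i x ((s.orderEmbOfFin h).injective hx), s.orderEmbOfFin_mem h _⟩
  have hmono : StrictMono fun x : Fin k => s.orderEmbOfFin h (i.succAbove x) :=
    (s.orderEmbOfFin h).strictMono.comp (Fin.strictMono_succAbove i)
  exact congrFun (Finset.orderEmbOfFin_unique he hmem hmono) j

theorem IsQPPair.exists_card_erase_inter {m : Type*} [DecidableEq m] {k : ℕ} {α β : Finset m}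
    (h : IsQPPair (k + 1) α β) : ∃ a ∈ α, k ≤ ((α ∩ β).erase a).card := by
  obtain ⟨hα, hβ, hαβ⟩ := h
  by_cases hsub : α ⊆ β
  · obtain ⟨a, ha⟩ : α.Nonempty := Finset.card_pos.mp (by omega)
    refine ⟨a, ha, ?_⟩
    rw [Finset.inter_eq_left.mpr hsub, Finset.card_erase_of_mem ha, hα]
    omega
  · obtain ⟨a, ha, haβ⟩ := Finset.not_subset.mp hsub
    refine ⟨a, ha, ?_⟩
    rw [Finset.erase_eq_of_notMem fun h => haβ (Finset.mem_inter.mp h).2]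
    omega

theorem IsQPPair.exists_forall_erase {m : Type*} [DecidableEq m] {k : ℕ} {α β : Finset m}
    (h : IsQPPair (k + 1) α β) : ∃ a ∈ α, ∀ b ∈ β, IsQPPair k (α.erase a) (β.erase b) := by
  obtain ⟨a, ha, hk⟩ := h.exists_card_erase_inter
  refine ⟨a, ha, fun b hb => ⟨?_, ?_, ?_⟩⟩
  · rw [Finset.card_erase_of_mem ha, h.1]; rfl
  · rw [Finset.card_erase_of_mem hb, h.2.1]; rfl
  · rw [Finset.erase_inter, Finset.inter_erase, Finset.erase_right_comm]
    exact (Nat.sub_le_sub_right hk 1).trans Finset.pred_card_le_card_erase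

theorem IsQPPair.eq_univ {m : Type*} [Fintype m] [DecidableEq m] {α β : Finset m}
    (h : IsQPPair (Fintype.card m) α β) : α = Finset.univ ∧ β = Finset.univ :=
  ⟨α.eq_univ_of_card h.1, β.eq_univ_of_card h.2.1⟩

theorem exists_isQPPair {m : Type*} [Fintype m] [DecidableEq m] {k : ℕ}
    (hk : k ≤ Fintype.card m) : ∃ α β : Finset m, IsQPPair k α β := by
  obtain ⟨t, -, ht⟩ := Finset.exists_subset_card_eq (s := (Finset.univ : Finset m)) hk
  exact ⟨t, t, ht, ht, by rw [Finset.inter_self, ht]; omega⟩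

section QuasiPrincipalMinors

variable {R : Type*} [CommRing R] {m : Type*} [Fintype m] [LinearOrder m]

theorem qMinor_eq_det (B : Matrix m m R) {k : ℕ} {α β : Finset m}
    (hα : α.card = k) (hβ : β.card = k) :
    qMinor B α β =
      (Matrix.of fun i j : Fin k => B (α.orderEmbOfFin hα i) (β.orderEmbOfFin hβ j)).det := by
  subst hα
  rw [qMinor, dif_pos hβ]

theorem qMinor_eq_sum_erase (B : Matrix m m R) {k : ℕ} {α β : Finset m}
    (hα : α.card = k + 1) (hβ : β.card = k + 1) (i : Fin (k + 1)) :
    qMinor B α β = ∑ j : Fin (k + 1),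
      (-1) ^ (i + j : ℕ) * B (α.orderEmbOfFin hα i) (β.orderEmbOfFin hβ j) *
        qMinor B (α.erase (α.orderEmbOfFin hα i)) (β.erase (β.orderEmbOfFin hβ j)) := by
  rw [qMinor_eq_det B hα hβ, Matrix.det_succ_row _ i]
  refine Finset.sum_congr rfl fun j _ => ?_
  have hea : (α.erase (α.orderEmbOfFin hα i)).card = k := by
    rw [Finset.card_erase_of_mem (α.orderEmbOfFin_mem hα i), hα]; rfl
  have heb : (β.erase (β.orderEmbOfFin hβ j)).card = k := by
    rw [Finset.card_erase_of_mem (β.orderEmbOfFin_mem hβ j), hβ]; rfl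
  rw [qMinor_eq_det B hea heb]
  congr 2
  ext i' j'
  simp only [Matrix.submatrix_apply, Matrix.of_apply,
    α.orderEmbOfFin_succAbove hα i hea, β.orderEmbOfFin_succAbove hβ j heb]

theorem QPAllZero.succ {B : Matrix m m R} {k : ℕ} (h : QPAllZero B k) : QPAllZero B (k + 1) := by
  intro α β hαβ
  obtain ⟨a, ha, hab⟩ := hαβ.exists_forall_erase
  obtain ⟨i, rfl⟩ : a ∈ Set.range (α.orderEmbOfFin hαβ.1) := by
    rwa [Finset.range_orderEmbOfFin]
  rw [qMinor_eq_sum_erase B hαβ.1 hαβ.2.1 i]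
  refine Finset.sum_eq_zero fun j _ => ?_
  rw [h _ _ (hab _ (β.orderEmbOfFin_mem _ j)), mul_zero]

theorem QPAllZero.not_qpAllNonzero {B : Matrix m m R} {k : ℕ} (h : QPAllZero B k)
    (hk : k ≤ Fintype.card m) : ¬ QPAllNonzero B k := fun hnz => by
  obtain ⟨α, β, hαβ⟩ := exists_isQPPair (m := m) hk
  exact hnz α β hαβ (h α β hαβ)

theorem qpAllZero_of_qprEntry_eq_N {B : Matrix m m R} {k : ℕ} (h : qprEntry B k = QPR.N) :
    QPAllZero B k := by
  unfold qprEntry at h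
  split_ifs at h with _ hz
  exact hz

theorem qprEntry_eq_N_of_qpAllZero {B : Matrix m m R} {k : ℕ} (h : QPAllZero B k)
    (hk : k ≤ Fintype.card m) : qprEntry B k = QPR.N := by
  rw [qprEntry, if_neg (h.not_qpAllNonzero hk), if_pos h]

theorem qprEntry_succ_eq_N {B : Matrix m m R} {k : ℕ} (h : qprEntry B k = QPR.N)
    (hk : k + 1 ≤ Fintype.card m) : qprEntry B (k + 1) = QPR.N :=
  qprEntry_eq_N_of_qpAllZero (qpAllZero_of_qprEntry_eq_N h).succ hk

theorem qprEntry_card_ne_S (B : Matrix m m R) : qprEntry B (Fintype.card m) ≠ QPR.S := by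
  unfold qprEntry
  split_ifs with hnz hz
  · exact QPR.noConfusion
  · exact QPR.noConfusion
  · refine absurd ?_ hz
    obtain ⟨α, β, hαβ, h0⟩ : ∃ α β, IsQPPair (Fintype.card m) α β ∧ qMinor B α β = 0 := by
      simpa [QPAllNonzero] using hnz
    obtain ⟨rfl, rfl⟩ := hαβ.eq_univ
    intro α' β' h'
    obtain ⟨rfl, rfl⟩ := h'.eq_univ
    exact h0

end QuasiPrincipalMinors

/-- if a sequence from `{A, S, N}` is attainable over a field `F`, then
(i) the last term is not `S`, and (ii) every term immediately following an `N` is `N`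
(i.e. neither `NA` nor `NS` occurs as a consecutive subsequence). -/
theorem stmt_2 {F : Type*} [Field F] {n : ℕ} (q : Fin n → QPR) (h : Attainable F q) :
    (∀ hn : 0 < n, q ⟨n - 1, by omega⟩ ≠ QPR.S) ∧
      ∀ k : Fin n, ∀ hk : (k : ℕ) + 1 < n,
        q k = QPR.N → q ⟨(k : ℕ) + 1, hk⟩ = QPR.N := by
  obtain ⟨B, -, hq⟩ := h
  refine ⟨fun hn => ?_, fun k hk hN => ?_⟩
  · have hlast : qprEntry B n = q ⟨n - 1, by omega⟩ := by
      simpa [Nat.sub_add_cancel hn] using hq ⟨n - 1, by omega⟩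
    rw [← hlast]
    simpa using qprEntry_card_ne_S B
  · rw [← hq ⟨k + 1, hk⟩]
    exact qprEntry_succ_eq_N (hq k ▸ hN) (by simpa using hk)
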